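/- Define the matrix rational parity P(X) = s(X) / Π_{j=0}^{k} s_{{j}}(X), where s(X) is the sum of all maximal minors of the (n+1)×(k+1) matrix X and s_{{j}}(X) is the sum of the entries of column j (assumed nonzero). Then: (a) if k+1 is odd, P(X) is invariant under cyclic permutations of the rows of X; (b) Σ_{j=0}^{k} (-1)^j P(δⱼ*X) = P(X) if k+1 is odd, and = 0 if k+1 is even. -/

import Mathlib

/-!
(a) Moving every row down by one cyclically sends the `(k+1)`-subset `T` of rows to `T - 1`.
The rows `t₀ < ⋯ < t_k` of `T` give rows `t₀ - 1, …, t_k - 1` of `X`, which are still in increasing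
order when `0 ∉ T`; when `0 ∈ T` the first of them is the last row `n`, so they are the sorted rows
of `T - 1` rotated by a `(k+1)`-cycle, of sign `(-1)^k = 1`. Hence the minor sum is unchanged, and
so are the column sums.

(b) Cancelling `s_j(X)` turns the claim into `Σⱼ (-1)^j s_j(X) s(δⱼX) = [k even] s(X)`. Writing
`s_j(X) = Σᵢ X i j` and expanding along the first row, the left side is the sum over `k`-subsets `S`
and rows `i` of the minor with rows `i, S`. This vanishes for `i ∈ S`; otherwise, if `i` is the
`p`-th element of `T = S ∪ {i}`, it is `(-1)^p` times the minor on `T`, and `Σ_{p ≤ k} (-1)^p`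
is `1` for even `k` and `0` for odd `k`.
-/

/-- Sum of all maximal minors of an `N × M` matrix. -/
def minorSum {N M : ℕ} {R : Type*} [CommRing R] (X : Matrix (Fin N) (Fin M) R) : R :=
  ∑ T ∈ (Finset.univ.powersetCard M : Finset (Finset (Fin N))).attach,
    Matrix.det (Matrix.of fun a b =>
      X (T.1.orderEmbOfFin (Finset.mem_powersetCard.mp T.2).2 a) b)

/-- `delCol X j` is the matrix `X` with its `j`-th column deleted. -/
def delCol {N M : ℕ} {R : Type*} (X : Matrix (Fin N) (Fin (M + 1)) R) (j : Fin (M + 1)) :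
    Matrix (Fin N) (Fin M) R :=
  Matrix.of fun i a => X i (j.succAbove a)

/-- The matrix rational parity `P(X) = s(X) / Πⱼ s_{{j}}(X)`. -/
def matParity {N M : ℕ} (X : Matrix (Fin N) (Fin M) ℚ) : ℚ :=
  minorSum X / ∏ j, ∑ i, X i j

open Finset Matrix

namespace Fin

lemma strictMono_sub_one {ι : Type*} [Preorder ι] {n : ℕ} {f : ι → Fin (n + 1)}
    (hf : StrictMono f) (h0 : ∀ i, f i ≠ 0) : StrictMono fun i => f i - 1 := by
  intro a b hab
  have hlt := Fin.lt_def.mp (hf hab)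
  have ha := Fin.val_ne_zero_iff.mpr (h0 a)
  rw [Fin.lt_def, val_sub_one_of_ne_zero (h0 a), val_sub_one_of_ne_zero (h0 b)]
  omega

lemma sub_one_lt_zero_sub_one {n : ℕ} {x : Fin (n + 1)} (hx : x ≠ 0) : x - 1 < 0 - 1 := by
  rw [Fin.lt_def, val_sub_one_of_ne_zero hx, coe_sub_one, if_pos rfl]
  omega

end Fin

namespace Finset

section SubOne

variable {n m : ℕ} (T : Finset (Fin (n + 1)))

lemma orderEmbOfFin_map_sub_one_of_zero_notMem (h0 : 0 ∉ T) (h : T.card = m)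
    (h' : (T.map (Equiv.subRight 1).toEmbedding).card = m) :
    ⇑((T.map (Equiv.subRight 1).toEmbedding).orderEmbOfFin h') = fun a => T.orderEmbOfFin h a - 1 :=
  (orderEmbOfFin_unique h' (fun a => mem_map_of_mem _ (orderEmbOfFin_mem T h a))
    (Fin.strictMono_sub_one (orderEmbOfFin T h).strictMono
      fun a ha => h0 (ha ▸ orderEmbOfFin_mem T h a))).symm

lemma orderEmbOfFin_map_sub_one_of_zero_mem (h0 : 0 ∈ T) (h : T.card = m + 1)
    (h' : (T.map (Equiv.subRight 1).toEmbedding).card = m + 1) :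
    ⇑((T.map (Equiv.subRight 1).toEmbedding).orderEmbOfFin h') =
      (fun a => T.orderEmbOfFin h a - 1) ∘ finRotate (m + 1) := by
  set t := T.orderEmbOfFin h
  have ht0 : t 0 = 0 := by
    obtain ⟨a, ha⟩ : (0 : Fin (n + 1)) ∈ Set.range t := by rwa [range_orderEmbOfFin]
    exact le_antisymm (ha ▸ t.monotone (Fin.zero_le a)) (Fin.zero_le _)
  have hsucc : ∀ j : Fin m, t j.succ ≠ 0 := fun j =>
    (ht0 ▸ t.strictMono (Fin.succ_pos j)).ne'
  have hsnoc : (fun a => t a - 1) ∘ finRotate (m + 1) =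
      Fin.snoc (α := fun _ => Fin (n + 1)) (fun j => t j.succ - 1) (0 - 1) := by
    rw [Fin.snoc_eq_cons_rotate, ← ht0]
    ext a
    conv_lhs => rw [← Fin.cons_self_tail (fun a => t a - 1)]
    rfl
  refine (orderEmbOfFin_unique h' (f := (fun a => t a - 1) ∘ finRotate (m + 1))
    (fun a => mem_map_of_mem _ (orderEmbOfFin_mem T h _)) ?_).symm
  rw [hsnoc, ← Fin.insertNth_last', Fin.strictMono_insertNth_iff]
  exact ⟨Fin.strictMono_sub_one (t.strictMono.comp Fin.strictMono_succ) hsucc,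
    fun j _ => Fin.sub_one_lt_zero_sub_one (hsucc j),
    fun j hj => absurd hj (Fin.castSucc_lt_last j).not_ge⟩

end SubOne

section Erase

variable {α : Type*} [LinearOrder α] {m : ℕ} (T : Finset α) (h : T.card = m + 1) (p : Fin (m + 1))

lemma orderEmbOfFin_erase (h' : (T.erase (T.orderEmbOfFin h p)).card = m) :
    ⇑((T.erase (T.orderEmbOfFin h p)).orderEmbOfFin h') = T.orderEmbOfFin h ∘ p.succAbove := by
  refine (orderEmbOfFin_unique h' (fun a => mem_erase.mpr ⟨?_, orderEmbOfFin_mem T h _⟩)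
    ((T.orderEmbOfFin h).strictMono.comp (Fin.strictMono_succAbove p))).symm
  exact fun ha => Fin.succAbove_ne p a ((T.orderEmbOfFin h).injective ha)

lemma cons_orderEmbOfFin_erase (h' : (T.erase (T.orderEmbOfFin h p)).card = m) :
    Fin.cons (T.orderEmbOfFin h p) ((T.erase (T.orderEmbOfFin h p)).orderEmbOfFin h') =
      T.orderEmbOfFin h ∘ p.cycleRange.symm := by
  rw [Equiv.eq_comp_symm, orderEmbOfFin_erase, Fin.cons_comp_cycleRange]
  exact Fin.insertNth_self_removeNth p _

end Erase

section DoubleCounting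

variable {α β : Type*} [Fintype α] [DecidableEq α] [AddCommMonoid β]

lemma sum_powersetCard_sum_compl (k : ℕ) (f : Finset α → α → β) :
    ∑ S ∈ univ.powersetCard k, ∑ i ∈ Sᶜ, f S i =
      ∑ T ∈ univ.powersetCard (k + 1), ∑ i ∈ T, f (T.erase i) i := by
  rw [sum_sigma', sum_sigma']
  refine sum_bij' (fun x _ => ⟨insert x.2 x.1, x.2⟩) (fun y _ => ⟨y.1.erase y.2, y.2⟩)
    ?_ ?_ ?_ ?_ ?_
  all_goals simp only [mem_sigma, mem_powersetCard_univ, mem_compl, and_imp, Sigma.forall]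
  · intro S i hS hi
    exact ⟨by rw [card_insert_of_notMem hi, hS], mem_insert_self i S⟩
  · intro T i hT hi
    exact ⟨by rw [card_erase_of_mem hi, hT, Nat.add_sub_cancel], notMem_erase i T⟩
  · intro S i _ hi
    rw [erase_insert hi]
  · intro T i _ hi
    rw [insert_erase hi]
  · intro S i _ hi
    rw [erase_insert hi]

end DoubleCounting

end Finset

section Minors

variable {R : Type*} [CommRing R] {N M : ℕ}

-- The junk value `0` for `T.card ≠ M` lets `rowMinor X` be summed over `powersetCard` directly.
def rowMinor (X : Matrix (Fin N) (Fin M) R) (T : Finset (Fin N)) : R :=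
  if h : T.card = M then (X.submatrix (T.orderEmbOfFin h) id).det else 0

lemma rowMinor_of_card {X : Matrix (Fin N) (Fin M) R} {T : Finset (Fin N)} (h : T.card = M) :
    rowMinor X T = (X.submatrix (T.orderEmbOfFin h) id).det :=
  dif_pos h

lemma minorSum_eq_sum_rowMinor (X : Matrix (Fin N) (Fin M) R) :
    minorSum X = ∑ T ∈ univ.powersetCard M, rowMinor X T := by
  rw [minorSum, ← sum_attach (univ.powersetCard M)]
  exact sum_congr rfl fun T _ => (rowMinor_of_card _).symm

lemma det_submatrix_comp_perm {m : ℕ} (X : Matrix (Fin N) (Fin m) R) (f : Fin m → Fin N)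
    (σ : Equiv.Perm (Fin m)) :
    (X.submatrix (f ∘ σ) id).det = σ.sign * (X.submatrix f id).det :=
  det_permute σ (X.submatrix f id)

end Minors

section Shift

variable {R : Type*} [CommRing R] {n k : ℕ}

lemma rowMinor_submatrix_sub_one (hk : Even k) (X : Matrix (Fin (n + 1)) (Fin (k + 1)) R)
    (T : Finset (Fin (n + 1))) :
    rowMinor (X.submatrix (· - 1) id) T = rowMinor X (T.map (Equiv.subRight 1).toEmbedding) := by
  by_cases hT : T.card = k + 1
  · have hT' : (T.map (Equiv.subRight 1).toEmbedding).card = k + 1 := (card_map _).trans hT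
    rw [rowMinor_of_card hT, rowMinor_of_card hT']
    by_cases h0 : 0 ∈ T
    · rw [orderEmbOfFin_map_sub_one_of_zero_mem T h0 hT hT', det_submatrix_comp_perm,
        sign_finRotate, Nat.add_sub_cancel, hk.neg_one_pow, Units.val_one, Int.cast_one, one_mul]
      rfl
    · rw [orderEmbOfFin_map_sub_one_of_zero_notMem T h0 hT hT']
      rfl
  · rw [rowMinor, rowMinor, dif_neg hT, dif_neg (by rwa [card_map])]

lemma minorSum_submatrix_sub_one (hk : Even k) (X : Matrix (Fin (n + 1)) (Fin (k + 1)) R) :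
    minorSum (X.submatrix (· - 1) id) = minorSum X := by
  simp_rw [minorSum_eq_sum_rowMinor, rowMinor_submatrix_sub_one hk]
  conv_rhs => rw [← map_univ_equiv (Equiv.subRight 1), powersetCard_map, sum_map]
  rfl

end Shift

section Laplace

variable {R : Type*} [CommRing R] {N M : ℕ}

def consRowMinor (X : Matrix (Fin N) (Fin (M + 1)) R) (i : Fin N) (S : Finset (Fin N)) : R :=
  if h : S.card = M then (X.submatrix (Fin.cons i (S.orderEmbOfFin h)) id).det else 0

lemma sum_mul_rowMinor_delCol (X : Matrix (Fin N) (Fin (M + 1)) R) (i : Fin N)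
    (S : Finset (Fin N)) :
    ∑ j : Fin (M + 1), (-1) ^ (j : ℕ) * X i j * rowMinor (delCol X j) S = consRowMinor X i S := by
  by_cases h : S.card = M
  · rw [consRowMinor, dif_pos h, det_succ_row_zero]
    refine sum_congr rfl fun j _ => ?_
    rw [rowMinor_of_card h]
    rfl
  · simp [consRowMinor, rowMinor, h]

lemma consRowMinor_of_mem (X : Matrix (Fin N) (Fin (M + 1)) R) {i : Fin N} {S : Finset (Fin N)}
    (hi : i ∈ S) : consRowMinor X i S = 0 := by
  rw [consRowMinor]
  split_ifs with h
  · obtain ⟨a, rfl⟩ : i ∈ Set.range (S.orderEmbOfFin h) := by rwa [range_orderEmbOfFin]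
    exact det_zero_of_row_eq (Fin.succ_ne_zero a).symm rfl
  · rfl

lemma consRowMinor_erase (X : Matrix (Fin N) (Fin (M + 1)) R) {T : Finset (Fin N)}
    (h : T.card = M + 1) (p : Fin (M + 1)) :
    consRowMinor X (T.orderEmbOfFin h p) (T.erase (T.orderEmbOfFin h p)) =
      (-1) ^ (p : ℕ) * rowMinor X T := by
  have h' : (T.erase (T.orderEmbOfFin h p)).card = M := by
    rw [card_erase_of_mem (orderEmbOfFin_mem T h p), h, Nat.add_sub_cancel]
  rw [consRowMinor, dif_pos h', cons_orderEmbOfFin_erase, det_submatrix_comp_perm,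
    Equiv.Perm.sign_symm, Fin.sign_cycleRange, rowMinor_of_card h]
  push_cast
  rfl

end Laplace

lemma sum_neg_one_pow_mul_colSum_mul_minorSum_delCol {R : Type*} [CommRing R] {N M : ℕ}
    (X : Matrix (Fin N) (Fin (M + 1)) R) :
    ∑ j : Fin (M + 1), (-1) ^ (j : ℕ) * (∑ i, X i j) * minorSum (delCol X j) =
      if Even M then minorSum X else 0 := by
  calc ∑ j : Fin (M + 1), (-1) ^ (j : ℕ) * (∑ i, X i j) * minorSum (delCol X j)
      = ∑ S ∈ univ.powersetCard M, ∑ i, consRowMinor X i S := by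
        simp_rw [← sum_mul_rowMinor_delCol, minorSum_eq_sum_rowMinor, mul_sum, sum_mul]
        rw [sum_comm]
        exact sum_congr rfl fun S _ => sum_comm
    _ = ∑ S ∈ univ.powersetCard M, ∑ i ∈ Sᶜ, consRowMinor X i S :=
        sum_congr rfl fun S _ => (sum_subset (subset_univ _) fun i _ hi =>
          consRowMinor_of_mem X (not_not.mp (mt mem_compl.mpr hi))).symm
    _ = ∑ T ∈ univ.powersetCard (M + 1), ∑ i ∈ T, consRowMinor X i (T.erase i) :=
        sum_powersetCard_sum_compl M fun S i => consRowMinor X i S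
    _ = ∑ T ∈ univ.powersetCard (M + 1), (∑ p : Fin (M + 1), (-1) ^ (p : ℕ)) * rowMinor X T := by
        refine sum_congr rfl fun T hT => ?_
        have hT : T.card = M + 1 := (mem_powersetCard_univ.mp hT)
        rw [← congrArg (∑ i ∈ ·, consRowMinor X i (T.erase i)) (map_orderEmbOfFin_univ T hT),
          sum_map, sum_mul]
        exact sum_congr rfl fun p _ => consRowMinor_erase X hT p
    _ = if Even M then minorSum X else 0 := by
        rw [Fin.sum_neg_one_pow, minorSum_eq_sum_rowMinor]
        by_cases hM : Even M <;> simp [hM, Nat.even_add_one]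

lemma matParity_delCol {N M : ℕ} (X : Matrix (Fin N) (Fin (M + 1)) ℚ) (j : Fin (M + 1))
    (hj : ∑ i, X i j ≠ 0) :
    matParity (delCol X j) = (∑ i, X i j) * minorSum (delCol X j) / ∏ j', ∑ i, X i j' := by
  rw [matParity, Fin.prod_univ_succAbove _ j, mul_div_mul_left _ _ hj]
  rfl

theorem matParity_props_general (n k : ℕ)
    (X : Matrix (Fin (n + 1)) (Fin (k + 1)) ℚ) (hcol : ∀ j, ∑ i, X i j ≠ 0) :
    (Even k → matParity (Matrix.of fun i j => X (i - 1) j) = matParity X) ∧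
    (∑ j : Fin (k + 1), (-1) ^ (j : ℕ) * matParity (delCol X j)
      = if Even k then matParity X else 0) := by
  refine ⟨fun hk => ?_, ?_⟩
  · have hcolSum (j) : ∑ i, X (i - 1) j = ∑ i, X i j := (Equiv.subRight 1).sum_comp (X · j)
    simp only [matParity, of_apply, hcolSum]
    exact congrArg (· / _) (minorSum_submatrix_sub_one hk X)
  · simp_rw [matParity_delCol X _ (hcol _), mul_div_assoc', ← sum_div, ← mul_assoc,
      sum_neg_one_pow_mul_colSum_mul_minorSum_delCol, ite_div, zero_div]
    rfl

/-- Properties of the matrix rational parity: (a) if `k+1` is odd, `P` is invariant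
under cyclic permutation of the rows (sending row `i` to row `i+1 mod (n+1)`);
(b) `Σⱼ (-1)^j P(δⱼ*X)` equals `P(X)` if `k+1` is odd and `0` if `k+1` is even. -/
theorem matParity_props (n k : ℕ) (hkn : k ≤ n)
    (X : Matrix (Fin (n + 1)) (Fin (k + 1)) ℚ) (hcol : ∀ j, ∑ i, X i j ≠ 0) :
    (Even k → matParity (Matrix.of fun i j => X (i - 1) j) = matParity X) ∧
    (∑ j : Fin (k + 1), (-1) ^ (j : ℕ) * matParity (delCol X j)
      = if Even k then matParity X else 0) :=
  matParity_props_general n k X hcol
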